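/- arXiv:2509.01378 — 2 statements merged into one kernel-verified Lean document; each statement's English description precedes it below -/
import Mathlib

section
/- For Q = [a,b,c] with real coefficients and z = x + iy ∈ ℍ with Q(z,1) ≠ 0, the Bruinier–Funke operator ξ_{2k+2} = 2iy^{2k+2} · conjugate(∂_{z̄}) applied to the function z ↦ Q_z/Q(z,1)^{k+1} yields −y^{2k}/Q(z̄,1)^k, where Q(z̄,1) = az̄² + bz̄ + c. -/
open Complex

/-- Wirtinger derivative with respect to `z̄`: `(1/2)(∂_x + i ∂_y)`. -/
noncomputable def dzbar (f : ℂ → ℂ) (z : ℂ) : ℂ :=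
  (1 / 2 : ℂ) * (deriv (fun x : ℝ => f ((x : ℂ) + z.im * Complex.I)) z.re
    + Complex.I * deriv (fun y : ℝ => f ((z.re : ℂ) + y * Complex.I)) z.im)

/-- Bruinier–Funke operator `ξ_κ f = 2 i y^κ conj(∂_{z̄} f)` (here `κ : ℤ`). -/
noncomputable def xiOp (κ : ℤ) (f : ℂ → ℂ) (z : ℂ) : ℂ :=
  2 * Complex.I * (z.im : ℂ) ^ κ * (starRingEnd ℂ) (dzbar f z)

/-- `Q(z,1) = a z² + b z + c`. -/
noncomputable def Qc (a b c : ℝ) (z : ℂ) : ℂ :=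
  (a : ℂ) * z ^ 2 + (b : ℂ) * z + (c : ℂ)

/-- `Q_z = (a|z|² + b Re z + c)/Im z`. -/
noncomputable def Qzq (a b c : ℝ) (z : ℂ) : ℝ :=
  (a * ‖z‖ ^ 2 + b * z.re + c) / z.im

/-! The function is `Q_z · Q(z,1)^{-(k+1)}` with the second factor holomorphic, so `∂_{z̄}` only
sees `Q_z`, and a direct computation gives `2 i y² ∂_{z̄} Q_z = Q(z,1)`. Hence
`∂_{z̄} f = 1 / (2 i y² Q(z,1)^k)`, and conjugating and multiplying by `2 i y^{2k+2}` gives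
`-y^{2k} / Q(z̄,1)^k`. -/

lemma HasDerivAt.comp_horizontal {g : ℂ → ℂ} {g' z : ℂ} (hg : HasDerivAt g g' z) :
    HasDerivAt (fun x : ℝ => g (x + z.im * I)) g' z.re := by
  rw [← re_add_im z] at hg
  exact (hg.comp_add_const _ _).comp_ofReal

lemma HasDerivAt.comp_vertical {g : ℂ → ℂ} {g' z : ℂ} (hg : HasDerivAt g g' z) :
    HasDerivAt (fun y : ℝ => g (z.re + y * I)) (g' * I) z.im := by
  rw [← re_add_im z] at hg
  have hline : HasDerivAt (fun w : ℂ => (z.re : ℂ) + w * I) I z.im := by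
    simpa using ((hasDerivAt_id (z.im : ℂ)).mul_const I).const_add (z.re : ℂ)
  exact (HasDerivAt.comp (h := fun w : ℂ => (z.re : ℂ) + w * I) _ hg hline).comp_ofReal

lemma dzbar_eq_of_hasDerivAt {f : ℂ → ℂ} {z fx fy : ℂ}
    (hx : HasDerivAt (fun x : ℝ => f (x + z.im * I)) fx z.re)
    (hy : HasDerivAt (fun y : ℝ => f (z.re + y * I)) fy z.im) :
    dzbar f z = 1 / 2 * (fx + I * fy) := by
  rw [dzbar, hx.deriv, hy.deriv]

lemma dzbar_mul_of_differentiableAt {u g : ℂ → ℂ} {z : ℂ}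
    (hux : DifferentiableAt ℝ (fun x : ℝ => u (x + z.im * I)) z.re)
    (huy : DifferentiableAt ℝ (fun y : ℝ => u (z.re + y * I)) z.im)
    (hg : DifferentiableAt ℂ g z) :
    dzbar (fun w => u w * g w) z = dzbar u z * g z := by
  have hgx := hg.hasDerivAt.comp_horizontal
  have hgy := hg.hasDerivAt.comp_vertical
  rw [dzbar_eq_of_hasDerivAt (hux.hasDerivAt.mul hgx) (huy.hasDerivAt.mul hgy),
    dzbar_eq_of_hasDerivAt hux.hasDerivAt huy.hasDerivAt]
  simp only [re_add_im]
  linear_combination (u z * deriv g z / 2) * I_sq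

lemma hasDerivAt_Qzq_horizontal (a b c : ℝ) (z : ℂ) :
    HasDerivAt (fun x : ℝ => (Qzq a b c (x + z.im * I) : ℂ))
      (((2 * a * z.re + b) / z.im : ℝ) : ℂ) z.re := by
  have h := (((((hasDerivAt_pow 2 z.re).add_const (z.im ^ 2)).const_mul a).add
    ((hasDerivAt_id' z.re).const_mul b)).add_const c).div_const z.im
  convert h.ofReal_comp using 1
  · ext x
    simp [Qzq, Complex.sq_norm, Complex.normSq_apply]
    ring
  · push_cast; ring

lemma hasDerivAt_Qzq_vertical (a b c : ℝ) {z : ℂ} (hz : z.im ≠ 0) :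
    HasDerivAt (fun y : ℝ => (Qzq a b c (z.re + y * I) : ℂ))
      (((a * (z.im ^ 2 - z.re ^ 2) - b * z.re - c) / z.im ^ 2 : ℝ) : ℂ) z.im := by
  have h := ((((hasDerivAt_pow 2 z.im).const_add (z.re ^ 2)).const_mul a).add_const
      (b * z.re + c)).div (hasDerivAt_id' z.im) hz
  convert h.ofReal_comp using 1
  · ext y
    simp [Qzq, Complex.sq_norm, Complex.normSq_apply]
    ring
  · push_cast; field_simp; ring

lemma dzbar_Qzq (a b c : ℝ) {z : ℂ} (hz : z.im ≠ 0) :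
    dzbar (fun w => (Qzq a b c w : ℂ)) z = Qc a b c z / (2 * I * z.im ^ 2) := by
  rw [dzbar_eq_of_hasDerivAt (hasDerivAt_Qzq_horizontal a b c z) (hasDerivAt_Qzq_vertical a b c hz)]
  obtain ⟨x, y, rfl⟩ : ∃ x y : ℝ, z = x + y * I := ⟨_, _, (re_add_im z).symm⟩
  have hy : (y : ℂ) ≠ 0 := ofReal_ne_zero.mpr (by simpa using hz)
  simp only [Qc, add_re, add_im, ofReal_re, ofReal_im, mul_re, mul_im, I_re, I_im, mul_zero,
    mul_one, sub_zero, add_zero, zero_add]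
  push_cast
  field_simp
  linear_combination (-(a * x ^ 2 + b * x + c : ℂ)) * I_sq

lemma differentiable_Qc (a b c : ℝ) : Differentiable ℂ (Qc a b c) := by
  unfold Qc; fun_prop

lemma Qc_conj (a b c : ℝ) (z : ℂ) : Qc a b c (starRingEnd ℂ z) = starRingEnd ℂ (Qc a b c z) := by
  simp [Qc]

theorem stmt11_general (a b c : ℝ) (k : ℕ) (z : ℂ) (hz : 0 < z.im)
    (hQ : Qc a b c z ≠ 0) :
    xiOp (2 * k + 2) (fun w : ℂ => (Qzq a b c w : ℂ) / (Qc a b c w) ^ (k + 1)) z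
      = -(z.im : ℂ) ^ (2 * k) / (Qc a b c (starRingEnd ℂ z)) ^ k := by
  have hy : z.im ≠ 0 := hz.ne'
  have hdz : dzbar (fun w : ℂ => (Qzq a b c w : ℂ) / (Qc a b c w) ^ (k + 1)) z
      = dzbar (fun w => (Qzq a b c w : ℂ)) z / Qc a b c z ^ (k + 1) := by
    simp_rw [div_eq_mul_inv]
    rw [dzbar_mul_of_differentiableAt (u := fun w => (Qzq a b c w : ℂ))
      (g := fun w => (Qc a b c w ^ (k + 1))⁻¹) (hasDerivAt_Qzq_horizontal a b c z).differentiableAt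
      (hasDerivAt_Qzq_vertical a b c hy).differentiableAt
      (((differentiable_Qc a b c z).pow _).inv (pow_ne_zero _ hQ))]
  rw [xiOp, hdz, dzbar_Qzq a b c hy, Qc_conj]
  simp only [map_div₀, map_mul, map_pow, conj_ofReal, conj_I, map_ofNat]
  have hQ' : starRingEnd ℂ (Qc a b c z) ≠ 0 := (map_ne_zero _).mpr hQ
  have hy' : (z.im : ℂ) ≠ 0 := ofReal_ne_zero.mpr hy
  rw [show (2 * k + 2 : ℤ) = ((2 * k + 2 : ℕ) : ℤ) by push_cast; ring, zpow_natCast]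
  field_simp
  ring

theorem stmt11 (a b c : ℝ) (k : ℕ) (hk : 0 < k) (z : ℂ) (hz : 0 < z.im)
    (hQ : Qc a b c z ≠ 0) :
    xiOp (2 * k + 2) (fun w : ℂ => (Qzq a b c w : ℂ) / (Qc a b c w) ^ (k + 1)) z
      = -(z.im : ℂ) ^ (2 * k) / (Qc a b c (starRingEnd ℂ z)) ^ k :=
  stmt11_general a b c k z hz hQ
end

section
/- For D > 0 a discriminant, k > 2 even integer, z ∈ ℍ, and assuming absolute convergence of f_{k,D} and ω_{k+1,D}, the derivative of Zagier's function satisfies d/dz f_{k,D}(z) = (ik/y) f_{k,D}(z) − ik·ω_{k+1,D}(z), where y = Im(z). -/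
open Complex

/-- Integral binary quadratic forms `[a,b,c]` of discriminant `D`. -/
def QD (D : ℤ) : Type := {q : ℤ × ℤ × ℤ // q.2.1 ^ 2 - 4 * q.1 * q.2.2 = D}

/-- `Q(z,1) = a z² + b z + c`. -/
noncomputable def Qcz (q : ℤ × ℤ × ℤ) (z : ℂ) : ℂ :=
  (q.1 : ℂ) * z ^ 2 + (q.2.1 : ℂ) * z + (q.2.2 : ℂ)

/-- `Q_z = (a|z|² + b Re z + c)/Im z`. -/
noncomputable def Qq (q : ℤ × ℤ × ℤ) (z : ℂ) : ℝ :=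
  ((q.1 : ℝ) * ‖z‖ ^ 2 + (q.2.1 : ℝ) * z.re + (q.2.2 : ℝ)) / z.im

/-- Zagier's function `f_{k,D}`. -/
noncomputable def fkD (k : ℕ) (D : ℤ) (z : ℂ) : ℂ :=
  ∑' Q : QD D, 1 / (Qcz Q.1 z) ^ k

/-- The function `ω_{k+1,D}`. -/
noncomputable def omegaD (k : ℕ) (D : ℤ) (z : ℂ) : ℂ :=
  ∑' Q : QD D, (Qq Q.1 z : ℂ) / (Qcz Q.1 z) ^ (k + 1)

/-!
Since `D > 0`, `Q(·,1)` is a product of two real affine factors, and on the disc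
`|w - z| ≤ Im z / 2` each factor satisfies `|p z + r| ≤ 2 |p w + r|`. Hence on that
disc `|Q(w,1)|^{-k} ≤ 4^k |Q(z,1)|^{-k}`, the series of holomorphic terms converges locally
uniformly, and it may be differentiated termwise. Each derivative `-k Q'(z,1) / Q(z,1)^{k+1}` is
rewritten with `Q(z,1) = y Q_z + i y Q'(z,1)`.
-/

namespace Complex

lemma abs_mul_im_le_norm_ofReal_mul_add (p r : ℝ) (z : ℂ) : |p| * z.im ≤ ‖(p : ℂ) * z + r‖ :=
  calc |p| * z.im
      ≤ |p| * |z.im| := mul_le_mul_of_nonneg_left (le_abs_self _) (abs_nonneg p)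
    _ = |((p : ℂ) * z + r).im| := by simp [abs_mul]
    _ ≤ ‖(p : ℂ) * z + r‖ := abs_im_le_norm _

variable {z w : ℂ}

lemma half_im_le_im_of_dist_le (hw : dist w z ≤ z.im / 2) : z.im / 2 ≤ w.im := by
  have h : |w.im - z.im| ≤ dist w z := by simpa [dist_eq] using abs_im_le_norm (w - z)
  linarith [(abs_le.1 h).1]

lemma ofReal_mul_add_ne_zero {p r : ℝ} (hz : z.im ≠ 0) (h : p ≠ 0 ∨ r ≠ 0) :
    (p : ℂ) * z + r ≠ 0 := by
  intro h0
  have hp : p = 0 := by simpa [hz] using congrArg im h0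
  have hr : r = 0 := by simpa [hp] using congrArg re h0
  tauto

lemma norm_ofReal_mul_add_le_two_mul (p r : ℝ) (hw : dist w z ≤ z.im / 2) :
    ‖(p : ℂ) * z + r‖ ≤ 2 * ‖(p : ℂ) * w + r‖ := by
  have hzw : ‖(p : ℂ) * z + r‖ ≤ ‖(p : ℂ) * w + r‖ + |p| * dist z w :=
    calc ‖(p : ℂ) * z + r‖ = ‖((p : ℂ) * w + r) + p * (z - w)‖ := by ring_nf
      _ ≤ ‖(p : ℂ) * w + r‖ + |p| * dist z w := by
        rw [dist_eq, ← Real.norm_eq_abs, ← norm_real, ← norm_mul]; exact norm_add_le _ _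
  have hdist : |p| * dist z w ≤ |p| * w.im := by
    rw [dist_comm]
    exact mul_le_mul_of_nonneg_left (hw.trans (half_im_le_im_of_dist_le hw)) (abs_nonneg p)
  linarith [abs_mul_im_le_norm_ofReal_mul_add p r w]

end Complex

open Complex

lemma exists_ofReal_affine_factorization_of_discrim_pos {a b c : ℝ} (h : 0 < discrim a b c) :
    ∃ p r p' r' : ℝ, (p ≠ 0 ∨ r ≠ 0) ∧ (p' ≠ 0 ∨ r' ≠ 0) ∧
      ∀ u : ℂ, (a : ℂ) * u ^ 2 + b * u + c = (p * u + r) * (p' * u + r') := by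
  rw [discrim] at h
  by_cases ha : a = 0
  · subst ha
    refine ⟨b, c, 0, 1, Or.inl ?_, Or.inr one_ne_zero, fun u => by push_cast; ring⟩
    rintro rfl
    norm_num at h
  · set s := √(b ^ 2 - 4 * a * c)
    have hs : (s : ℂ) ^ 2 = b ^ 2 - 4 * a * c := by exact_mod_cast Real.sq_sqrt h.le
    refine ⟨a, (b - s) / 2, 1, (b + s) / (2 * a), Or.inl ha, Or.inl one_ne_zero, fun u => ?_⟩
    have haC : (a : ℂ) ≠ 0 := by exact_mod_cast ha
    push_cast
    field_simp
    linear_combination hs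

section Quadratic

variable {a b c : ℝ} {z w : ℂ}

lemma quadratic_ne_zero_of_discrim_pos (h : 0 < discrim a b c) (hz : z.im ≠ 0) :
    (a : ℂ) * z ^ 2 + b * z + c ≠ 0 := by
  obtain ⟨p, r, p', r', hpr, hpr', hfac⟩ := exists_ofReal_affine_factorization_of_discrim_pos h
  rw [hfac]
  exact mul_ne_zero (ofReal_mul_add_ne_zero hz hpr) (ofReal_mul_add_ne_zero hz hpr')

lemma norm_quadratic_le_four_mul (h : 0 < discrim a b c) (hw : dist w z ≤ z.im / 2) :
    ‖(a : ℂ) * z ^ 2 + b * z + c‖ ≤ 4 * ‖(a : ℂ) * w ^ 2 + b * w + c‖ := by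
  obtain ⟨p, r, p', r', -, -, hfac⟩ := exists_ofReal_affine_factorization_of_discrim_pos h
  rw [hfac, hfac, norm_mul, norm_mul]
  calc ‖(p : ℂ) * z + r‖ * ‖(p' : ℂ) * z + r'‖
      ≤ (2 * ‖(p : ℂ) * w + r‖) * (2 * ‖(p' : ℂ) * w + r'‖) :=
        mul_le_mul (norm_ofReal_mul_add_le_two_mul p r hw)
          (norm_ofReal_mul_add_le_two_mul p' r' hw) (norm_nonneg _) (by positivity)
    _ = 4 * (‖(p : ℂ) * w + r‖ * ‖(p' : ℂ) * w + r'‖) := by ring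

end Quadratic

section BinaryQuadraticForm

variable {D : ℤ} {k : ℕ} {z w : ℂ}

lemma Qcz_eq_ofReal (q : ℤ × ℤ × ℤ) (u : ℂ) :
    Qcz q u = ((q.1 : ℝ) : ℂ) * u ^ 2 + ((q.2.1 : ℝ) : ℂ) * u + ((q.2.2 : ℝ) : ℂ) := by
  simp [Qcz]

lemma discrim_pos_of_QD (hD : 0 < D) (Q : QD D) : 0 < discrim (Q.1.1 : ℝ) Q.1.2.1 Q.1.2.2 := by
  rw [discrim]
  exact_mod_cast Q.2.symm ▸ hD

lemma Qcz_ne_zero (hD : 0 < D) (Q : QD D) (hz : z.im ≠ 0) : Qcz Q.1 z ≠ 0 := by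
  rw [Qcz_eq_ofReal]
  exact quadratic_ne_zero_of_discrim_pos (discrim_pos_of_QD hD Q) hz

lemma norm_Qcz_le_four_mul (hD : 0 < D) (Q : QD D) (hw : dist w z ≤ z.im / 2) :
    ‖Qcz Q.1 z‖ ≤ 4 * ‖Qcz Q.1 w‖ := by
  simpa only [Qcz_eq_ofReal] using norm_quadratic_le_four_mul (discrim_pos_of_QD hD Q) hw

lemma hasDerivAt_Qcz (q : ℤ × ℤ × ℤ) (z : ℂ) :
    HasDerivAt (Qcz q) (2 * q.1 * z + q.2.1) z := by
  have h := (((hasDerivAt_pow 2 z).const_mul (q.1 : ℂ)).add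
    ((hasDerivAt_id z).const_mul (q.2.1 : ℂ))).add_const (q.2.2 : ℂ)
  exact h.congr_deriv (by simp; ring)

lemma Qcz_eq_Qq_mul_im_add (q : ℤ × ℤ × ℤ) (hz : z.im ≠ 0) :
    Qcz q z = Qq q z * z.im + I * z.im * (2 * q.1 * z + q.2.1) := by
  have hnorm : ‖z‖ ^ 2 = z.re ^ 2 + z.im ^ 2 := by rw [Complex.sq_norm, normSq_apply]; ring
  rw [Qq, ofReal_div, div_mul_cancel₀ _ (ofReal_ne_zero.2 hz), hnorm]
  apply Complex.ext <;> simp [Qcz, pow_two] <;> ring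

lemma hasDerivAt_one_div_Qcz_pow (q : ℤ × ℤ × ℤ) (k : ℕ) (hQ : Qcz q z ≠ 0) :
    HasDerivAt (fun w => 1 / Qcz q w ^ k)
      (-k * (2 * q.1 * z + q.2.1) / Qcz q z ^ (k + 1)) z := by
  have h := (hasDerivAt_zpow (-k : ℤ) _ (Or.inl hQ)).comp z (hasDerivAt_Qcz q z)
  have hfun : (fun w => 1 / Qcz q w ^ k) = (fun u => u ^ (-k : ℤ)) ∘ Qcz q := by
    ext w; simp
  rw [hfun]
  refine h.congr_deriv ?_
  rw [show (-k : ℤ) - 1 = -((k + 1 : ℕ) : ℤ) by push_cast; ring, zpow_neg, zpow_natCast]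
  push_cast
  ring

lemma deriv_one_div_Qcz_pow (q : ℤ × ℤ × ℤ) (k : ℕ) (hQ : Qcz q z ≠ 0) (hz : z.im ≠ 0) :
    deriv (fun w => 1 / Qcz q w ^ k) z
      = I * k / z.im * (1 / Qcz q z ^ k) - I * k * (Qq q z / Qcz q z ^ (k + 1)) := by
  rw [(hasDerivAt_one_div_Qcz_pow q k hQ).deriv]
  have hzC : (z.im : ℂ) ≠ 0 := ofReal_ne_zero.2 hz
  have hkey := Qcz_eq_Qq_mul_im_add q hz
  field_simp
  rw [pow_succ]
  linear_combination (-I * k * Qcz q z ^ k) * hkey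
    - (z.im * k * (2 * q.1 * z + q.2.1) * Qcz q z ^ k) * I_sq

lemma norm_one_div_Qcz_pow_le (hD : 0 < D) (Q : QD D) (k : ℕ) (hz : 0 < z.im)
    (hw : dist w z ≤ z.im / 2) :
    ‖1 / Qcz Q.1 w ^ k‖ ≤ 4 ^ k * ‖1 / Qcz Q.1 z ^ k‖ := by
  have hQz : 0 < ‖Qcz Q.1 z‖ := norm_pos_iff.2 (Qcz_ne_zero hD Q hz.ne')
  have hle := norm_Qcz_le_four_mul hD Q hw
  have hQw : 0 < ‖Qcz Q.1 w‖ := by linarith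
  rw [norm_div, norm_div, norm_one, norm_pow, norm_pow, ← div_eq_mul_one_div,
    div_le_div_iff₀ (by positivity) (by positivity), one_mul, ← mul_pow]
  exact pow_le_pow_left₀ hQz.le hle k

lemma hasSum_deriv_fkD (hD : 0 < D) (hz : 0 < z.im)
    (hf : Summable fun Q : QD D => ‖1 / Qcz Q.1 z ^ k‖) :
    HasSum (fun Q : QD D => deriv (fun w => 1 / Qcz Q.1 w ^ k) z) (deriv (fkD k D) z) := by
  have him : ∀ w ∈ Metric.ball z (z.im / 2), w.im ≠ 0 := fun w hw =>
    (lt_of_lt_of_le (by positivity) (half_im_le_im_of_dist_le (Metric.mem_ball.1 hw).le)).ne'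
  refine hasSum_deriv_of_summable_norm (hf.mul_left (4 ^ k)) (fun Q => ?_) Metric.isOpen_ball
    (fun Q w hw => norm_one_div_Qcz_pow_le hD Q k hz (Metric.mem_ball.1 hw).le)
    (Metric.mem_ball_self (by positivity))
  exact fun w hw => (hasDerivAt_one_div_Qcz_pow Q.1 k
    (Qcz_ne_zero hD Q (him w hw))).differentiableAt.differentiableWithinAt

end BinaryQuadraticForm

theorem stmt17_general (D : ℤ) (hD : 0 < D) (k : ℕ)
    (z : ℂ) (hz : 0 < z.im)
    (hf : Summable fun Q : QD D => ‖1 / (Qcz Q.1 z) ^ k‖)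
    (hω : Summable fun Q : QD D => ‖(Qq Q.1 z : ℂ) / (Qcz Q.1 z) ^ (k + 1)‖) :
    deriv (fkD k D) z
      = Complex.I * (k : ℂ) / (z.im : ℂ) * fkD k D z
        - Complex.I * (k : ℂ) * omegaD k D z := by
  have hterm : Summable fun Q : QD D => I * k / z.im * (1 / Qcz Q.1 z ^ k) :=
    hf.of_norm.mul_left (I * k / z.im)
  have hωterm : Summable fun Q : QD D => I * k * (Qq Q.1 z / Qcz Q.1 z ^ (k + 1)) :=
    hω.of_norm.mul_left (I * k)
  rw [← (hasSum_deriv_fkD hD hz hf).tsum_eq,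
    tsum_congr fun Q : QD D => deriv_one_div_Qcz_pow Q.1 k (Qcz_ne_zero hD Q hz.ne') hz.ne',
    hterm.tsum_sub hωterm, tsum_mul_left, tsum_mul_left, fkD, omegaD]

theorem stmt17 (D : ℤ) (hD : 0 < D) (k : ℕ) (hk : 2 < k) (hkeven : Even k)
    (z : ℂ) (hz : 0 < z.im)
    (hf : Summable fun Q : QD D => ‖1 / (Qcz Q.1 z) ^ k‖)
    (hω : Summable fun Q : QD D => ‖(Qq Q.1 z : ℂ) / (Qcz Q.1 z) ^ (k + 1)‖) :
    deriv (fkD k D) z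
      = Complex.I * (k : ℂ) / (z.im : ℂ) * fkD k D z
        - Complex.I * (k : ℂ) * omegaD k D z :=
  stmt17_general D hD k z hz hf hω
end
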